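/- Let 𝒢=(V,E) be a temporal graph, δ∈ℕ, w∈V, and let τ_w^+ denote the set of time labels of time arcs of E with start vertex w. Let t ≤ t̂ be natural numbers such that no element of τ_w^+ lies in the interval [t, t̂). Then for every route R starting at w and every delay set D⊆E, there exists a D-traversal-delayed temporal walk following R whose first arc has time label at least t if and only if there exists a D-traversal-delayed temporal walk following R whose first arc has time label at least t̂. -/

import Mathlib

/-- A time arc of a temporal graph: start vertex, end vertex, time label, traversal time. -/
structure TimeArc (V : Type) where
  src : V
  dst : V
  time : ℕ
  trav : ℕ
deriving DecidableEq

variable {V : Type}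

/-- `P` is a `D`-traversal-delayed temporal walk in the temporal graph with time-arc set `E`
(with delay time `δ`). -/
def IsTDWalk [DecidableEq V] (E D : Finset (TimeArc V)) (δ : ℕ)
    (P : List (TimeArc V)) : Prop :=
  (∀ e ∈ P, e ∈ E) ∧
  P.Chain' (fun e f => f.src = e.dst ∧
    e.time + e.trav + (if e ∈ D then δ else 0) ≤ f.time)

/-- `P` is a `D`-starting-delayed temporal walk in the temporal graph with time-arc set `E`
(with delay time `δ`). -/
def IsSDWalk [DecidableEq V] (E D : Finset (TimeArc V)) (δ : ℕ)
    (P : List (TimeArc V)) : Prop :=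
  (∀ e ∈ P, e ∈ E) ∧
  P.Chain' (fun e f => f.src = e.dst ∧
    e.time + e.trav + (if e ∈ D then δ else 0) ≤ f.time + (if f ∈ D then δ else 0))

/-- The sequence of vertices visited by a walk: the start vertex of its first arc followed by
the end vertices of all its arcs. -/
def visits : List (TimeArc V) → List V
  | [] => []
  | e :: es => e.src :: (e :: es).map TimeArc.dst

/-- The walk `P` follows the route `R`: the visited vertex sequence of `P` equals `R`
(the empty walk follows every single-vertex route). -/
def Follows (P : List (TimeArc V)) (R : List V) : Prop :=
  match P with
  | [] => ∃ v, R = [v]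
  | e :: es => visits (e :: es) = R

/-- `R` is a `D`-traversal-delayed route: some `D`-traversal-delayed temporal walk follows `R`. -/
def IsTDRoute [DecidableEq V] (E D : Finset (TimeArc V)) (δ : ℕ) (R : List V) : Prop :=
  ∃ P : List (TimeArc V), IsTDWalk E D δ P ∧ Follows P R

/-- `R` is a `D`-starting-delayed route: some `D`-starting-delayed temporal walk follows `R`. -/
def IsSDRoute [DecidableEq V] (E D : Finset (TimeArc V)) (δ : ℕ) (R : List V) : Prop :=
  ∃ P : List (TimeArc V), IsSDWalk E D δ P ∧ Follows P R

/-- `R` is `x`-traversal-delay-robust: it is a `D`-traversal-delayed route for every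
`D ⊆ E` with `|D| ≤ x`. -/
def TDRobust [DecidableEq V] (E : Finset (TimeArc V)) (δ x : ℕ) (R : List V) : Prop :=
  ∀ D : Finset (TimeArc V), D ⊆ E → D.card ≤ x → IsTDRoute E D δ R

/-- `R` is `x`-starting-delay-robust: it is a `D`-starting-delayed route for every
`D ⊆ E` with `|D| ≤ x`. -/
def SDRobust [DecidableEq V] (E : Finset (TimeArc V)) (δ x : ℕ) (R : List V) : Prop :=
  ∀ D : Finset (TimeArc V), D ⊆ E → D.card ≤ x → IsSDRoute E D δ R

theorem statement15 {V : Type} [DecidableEq V] (E : Finset (TimeArc V)) (δ : ℕ)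
    (w : V) (t thatT : ℕ) (hle : t ≤ thatT)
    (hgap : ∀ e ∈ E, e.src = w → e.time ∉ Set.Ico t thatT)
    (R : List V) (hR : R.head? = some w)
    (D : Finset (TimeArc V)) (hD : D ⊆ E) :
    (∃ P : List (TimeArc V), IsTDWalk E D δ P ∧ Follows P R ∧
        ∃ e : TimeArc V, P.head? = some e ∧ t ≤ e.time) ↔
    (∃ P : List (TimeArc V), IsTDWalk E D δ P ∧ Follows P R ∧
        ∃ e : TimeArc V, P.head? = some e ∧ thatT ≤ e.time) := by
  constructor
  · rintro ⟨P, hW, hF, e, he, hte⟩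
    refine ⟨P, hW, hF, e, he, ?_⟩
    cases P with
    | nil => simp at he
    | cons a es =>
      simp only [List.head?_cons, Option.some.injEq] at he
      subst he
      have hsrc : a.src = w := by
        simp only [Follows, visits] at hF
        rw [← hF] at hR
        simpa using hR
      have heE : a ∈ E := hW.1 a List.mem_cons_self
      have := hgap a heE hsrc
      simp only [Set.mem_Ico, not_and, not_lt] at this
      exact this hte
  · rintro ⟨P, hW, hF, e, he, hte⟩
    exact ⟨P, hW, hF, e, he, hle.trans hte⟩
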